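/- Let M, Q be real numbers with M > |Q|, M > 0, set F(r) = 1 - 2M/r + Q²/r², r₊ = M + √(M² - Q²). Let q be real, l a natural number, and m a real number with m ≥ |qQ|/r₊. Then for every r > r₊: F(r)·m² + F(r)·l(l+1)/r² + F(r)·F'(r)/r - q²Q²·(1/r - 1/r₊)² > 0. (This is the pointwise positivity of the density of the modified conserved energy Ẽ, showing that for m ≥ |qQ|/r₊ there is no superradiance.) -/

import Mathlib

/-!
Write `F = (r - r₊)(r - r₋)/r²` with `r₋ = M - √(M² - Q²) ≤ r₊`. Beyond the horizon this gives
`(1 - r₊/r)² ≤ F`, which is exactly what makes the gauge term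
`q²Q²(1/r - 1/r₊)² = (|qQ|/r₊)² (1 - r₊/r)²` at most `F m²` once `m ≥ |qQ|/r₊`.
The angular term is nonnegative, and `F F'/r` is strictly positive because `F > 0` and
`F' = 2(Mr - Q²)/r³ > 0`.
-/

open Real

noncomputable section

def rnMetricCoeff (M Q r : ℝ) : ℝ := 1 - 2 * M / r + Q ^ 2 / r ^ 2

theorem hasDerivAt_rnMetricCoeff (M Q : ℝ) {r : ℝ} (hr : r ≠ 0) :
    HasDerivAt (rnMetricCoeff M Q) (2 * M / r ^ 2 - 2 * Q ^ 2 / r ^ 3) r := by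
  have h : HasDerivAt (fun x => 1 - 2 * M * x⁻¹ + Q ^ 2 * (x ^ 2)⁻¹)
      (0 - 2 * M * -(r ^ 2)⁻¹ + Q ^ 2 * (-(↑2 * r ^ (2 - 1)) / (r ^ 2) ^ 2)) r :=
    ((hasDerivAt_const r (1 : ℝ)).sub ((hasDerivAt_inv hr).const_mul (2 * M))).add
      (((hasDerivAt_pow 2 r).inv (pow_ne_zero 2 hr)).const_mul (Q ^ 2))
  convert h using 1
  · funext x
    simp only [rnMetricCoeff, div_eq_mul_inv]
  · field_simp
    ring

theorem rnMetricCoeff_eq_horizons (M Q : ℝ) {r : ℝ} (hQM : Q ^ 2 ≤ M ^ 2) (hr : r ≠ 0) :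
    rnMetricCoeff M Q r
      = (r - (M + √(M ^ 2 - Q ^ 2))) * (r - (M - √(M ^ 2 - Q ^ 2))) / r ^ 2 := by
  have hs : √(M ^ 2 - Q ^ 2) ^ 2 = M ^ 2 - Q ^ 2 := sq_sqrt (by linarith)
  rw [rnMetricCoeff]
  field_simp
  linear_combination hs

variable {M Q r : ℝ}

theorem pos_of_horizon_lt (hQM : |Q| ≤ M) (hr : M + √(M ^ 2 - Q ^ 2) < r) : 0 < r :=
  lt_of_le_of_lt ((abs_nonneg Q).trans hQM |>.trans (le_add_of_nonneg_right (sqrt_nonneg _))) hr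

theorem rnMetricCoeff_pos (hQM : |Q| ≤ M) (hr : M + √(M ^ 2 - Q ^ 2) < r) :
    0 < rnMetricCoeff M Q r := by
  have hr0 := pos_of_horizon_lt hQM hr
  rw [rnMetricCoeff_eq_horizons M Q (sq_le_sq' (neg_le_of_abs_le hQM) (le_of_abs_le hQM)) hr0.ne']
  have hs := sqrt_nonneg (M ^ 2 - Q ^ 2)
  apply div_pos (mul_pos _ _) (by positivity) <;> linarith

theorem one_sub_horizon_div_sq_le_rnMetricCoeff (hQM : |Q| ≤ M)
    (hr : M + √(M ^ 2 - Q ^ 2) < r) :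
    (1 - (M + √(M ^ 2 - Q ^ 2)) / r) ^ 2 ≤ rnMetricCoeff M Q r := by
  have hr0 := pos_of_horizon_lt hQM hr
  rw [rnMetricCoeff_eq_horizons M Q (sq_le_sq' (neg_le_of_abs_le hQM) (le_of_abs_le hQM)) hr0.ne',
    one_sub_div hr0.ne', div_pow, sq]
  have hs := sqrt_nonneg (M ^ 2 - Q ^ 2)
  gcongr
  linarith

theorem deriv_rnMetricCoeff_pos (hQM : |Q| < M) (hr : M ≤ r) :
    0 < deriv (rnMetricCoeff M Q) r := by
  have hM : 0 < M := (abs_nonneg Q).trans_lt hQM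
  have hr0 : 0 < r := hM.trans_le hr
  have hQ : Q ^ 2 < M * r := by
    rw [← sq_abs]
    nlinarith [abs_nonneg Q]
  rw [(hasDerivAt_rnMetricCoeff M Q hr0.ne').deriv,
    show 2 * M / r ^ 2 - 2 * Q ^ 2 / r ^ 3 = 2 * (M * r - Q ^ 2) / r ^ 3 by field_simp]
  have : 0 < M * r - Q ^ 2 := by linarith
  positivity

end

theorem no_superradiance_for_large_mass_general
    (M Q q m : ℝ) (l : ℕ) (hMQ : |Q| < M)
    (F : ℝ → ℝ) (hF : ∀ r, F r = 1 - 2*M/r + Q^2/r^2)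
    (rp : ℝ) (hrp : rp = M + Real.sqrt (M^2 - Q^2))
    (hm : |q*Q|/rp ≤ m) :
    ∀ r > rp,
      0 < F r * m^2 + F r * ((l : ℝ)*((l : ℝ)+1))/r^2 + F r * deriv F r / r
            - q^2*Q^2*(1/r - 1/rp)^2 := by
  intro r hr
  obtain rfl : F = rnMetricCoeff M Q := funext hF
  subst hrp
  have hr0 := pos_of_horizon_lt hMQ.le hr
  have hrp0 : 0 < M + √(M ^ 2 - Q ^ 2) := (abs_nonneg Q).trans_lt hMQ |>.trans_le
    (le_add_of_nonneg_right (sqrt_nonneg _))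
  have hFpos := rnMetricCoeff_pos hMQ.le hr
  have hgauge : q ^ 2 * Q ^ 2 * (1 / r - 1 / (M + √(M ^ 2 - Q ^ 2))) ^ 2
      ≤ m ^ 2 * rnMetricCoeff M Q r := calc
    _ = (|q * Q| / (M + √(M ^ 2 - Q ^ 2))) ^ 2 * (1 - (M + √(M ^ 2 - Q ^ 2)) / r) ^ 2 := by
      rw [div_pow, sq_abs]
      field_simp
      ring
    _ ≤ m ^ 2 * rnMetricCoeff M Q r := by
      gcongr
      exact one_sub_horizon_div_sq_le_rnMetricCoeff hMQ.le hr
  have hangular : 0 ≤ rnMetricCoeff M Q r * ((l : ℝ) * ((l : ℝ) + 1)) / r ^ 2 := by positivity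
  have hflux : 0 < rnMetricCoeff M Q r * deriv (rnMetricCoeff M Q) r / r :=
    div_pos (mul_pos hFpos (deriv_rnMetricCoeff_pos hMQ (le_add_of_nonneg_right
      (sqrt_nonneg _) |>.trans hr.le))) hr0
  linarith

theorem no_superradiance_for_large_mass
    (M Q q m : ℝ) (l : ℕ) (hMQ : |Q| < M) (hM : 0 < M)
    (F : ℝ → ℝ) (hF : ∀ r, F r = 1 - 2*M/r + Q^2/r^2)
    (rp : ℝ) (hrp : rp = M + Real.sqrt (M^2 - Q^2))
    (hm : |q*Q|/rp ≤ m) :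
    ∀ r > rp,
      0 < F r * m^2 + F r * ((l : ℝ)*((l : ℝ)+1))/r^2 + F r * deriv F r / r
            - q^2*Q^2*(1/r - 1/rp)^2 :=
  no_superradiance_for_large_mass_general M Q q m l hMQ F hF rp hrp hm
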